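/- arXiv:1202.4512 — 4 statements merged into one kernel-verified Lean document; each statement's English description precedes it below -/
import Mathlib

section
/- Let ζ ∈ (0, 1/2) and let Z : (0,∞) → [0,∞) be a measurable function with ∫₀^∞ Z(τ)² dτ < ∞. Assume that there exist constants C > 0 and t₀ ≥ 0 such that ∫_t^∞ Z(τ)² dτ ≤ C · Z(t)^{1/(1−ζ)} for almost every t ≥ t₀. Then Z is integrable on (t₀, ∞), i.e., ∫_{t₀}^∞ Z(τ) dτ < ∞. -/
/-!
Write `q = 1 - ζ ∈ (0, 1)` and `ν = Z² dt` on `(t₀, ∞)`, so the hypothesis reads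
`ν (t, ∞) ≤ C Z(t)^{1/q}`. Then `Z ≤ C^q Z² ν(t, ∞)^{-q}`, hence
`∫ Z ≤ C^q ∫ ν(t, ∞)^{-q} dν(t)`. Since `ν` has no atoms, `t ↦ ν(t, ∞)` pushes `ν` forward to a
measure below Lebesgue measure on `[0, ν ℝ]`, where `x^{-q}` is integrable because `q < 1`.
-/

open MeasureTheory Set Filter Topology ENNReal

theorem measurable_measure_Ioi (ν : Measure ℝ) : Measurable fun t ↦ ν (Ioi t) :=
  Antitone.measurable fun _ _ hst ↦ measure_mono (Ioi_subset_Ioi hst)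

/-- By inner regularity: a compact `K` in the level set lies in `Ici (min K)`, which has the same
measure as `Ioi (min K)` since `ν` has no atoms. -/
theorem measure_setOf_measure_Ioi_le (ν : Measure ℝ) [IsFiniteMeasure ν] [NullSingletonClass ν]
    (v : ℝ≥0∞) : ν {t | ν (Ioi t) ≤ v} ≤ v := by
  have hU : MeasurableSet {t | ν (Ioi t) ≤ v} :=
    measurableSet_le (measurable_measure_Ioi ν) measurable_const
  refine le_of_forall_lt fun w hw ↦ ?_
  obtain ⟨K, hKU, hK, hwK⟩ := hU.exists_lt_isCompact_of_ne_top (measure_ne_top ν _) hw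
  obtain ⟨k, hkK, hk⟩ := hK.exists_isLeast (nonempty_of_measure_ne_zero (pos_of_gt hwK).ne')
  calc w < ν K := hwK
    _ ≤ ν (Ici k) := measure_mono fun t ht ↦ hk ht
    _ = ν (Ioi k) := measure_congr Ioi_ae_eq_Ici.symm
    _ ≤ v := hKU hkK

theorem rpow_neg_le_tsum_indicator {a x : ℝ≥0∞} (ha : a ≠ ⊤) (hx : x ≠ 0) (hxa : x ≤ a)
    {q : ℝ} (hq : 0 ≤ q) :
    x ^ (-q) ≤
      ∑' n : ℕ, {y | y ≤ a * 2⁻¹ ^ n}.indicator (fun _ ↦ (a * 2⁻¹ ^ (n + 1)) ^ (-q)) x := by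
  have hlevels : Tendsto (fun n : ℕ ↦ a * 2⁻¹ ^ n) atTop (𝓝 0) := by
    simpa using ENNReal.Tendsto.const_mul
      (ENNReal.tendsto_pow_atTop_nhds_zero_of_lt_one (by norm_num : (2⁻¹ : ℝ≥0∞) < 1)) (.inr ha)
  have hex : ∃ n, a * 2⁻¹ ^ n < x := (hlevels.eventually_lt_const (pos_iff_ne_zero.2 hx)).exists
  classical
  obtain ⟨k, hk⟩ : ∃ k, Nat.find hex = k + 1 := by
    refine Nat.exists_eq_succ_of_ne_zero fun h ↦ hxa.not_gt ?_
    simpa [h] using Nat.find_spec hex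
  have hxk : x ≤ a * 2⁻¹ ^ k := not_lt.1 (Nat.find_min hex (by omega))
  have hkx : a * 2⁻¹ ^ (k + 1) ≤ x := (hk ▸ Nat.find_spec hex).le
  calc x ^ (-q) ≤ (a * 2⁻¹ ^ (k + 1)) ^ (-q) := by
        rw [rpow_neg, rpow_neg]; exact ENNReal.inv_le_inv.2 (rpow_le_rpow hkx hq)
    _ = {y | y ≤ a * 2⁻¹ ^ k}.indicator (fun _ ↦ (a * 2⁻¹ ^ (k + 1)) ^ (-q)) x :=
        (indicator_of_mem (s := {y | y ≤ a * 2⁻¹ ^ k}) hxk (fun _ ↦ _)).symm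
    _ ≤ _ := ENNReal.le_tsum k

theorem tsum_rpow_neg_mul_half_pow_ne_top {a : ℝ≥0∞} (ha0 : a ≠ 0) (ha : a ≠ ⊤) {q : ℝ}
    (hq : q < 1) : ∑' n : ℕ, (a * 2⁻¹ ^ (n + 1)) ^ (-q) * (a * 2⁻¹ ^ n) ≠ ⊤ := by
  have hterm : ∀ n : ℕ, (a * 2⁻¹ ^ (n + 1)) ^ (-q) * (a * 2⁻¹ ^ n)
      = a ^ (1 - q) * 2⁻¹ ^ (-q) * ((2⁻¹ : ℝ≥0∞) ^ (1 - q)) ^ n := by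
    intro n
    have h2 : (2⁻¹ : ℝ≥0∞) ^ (1 - q) = 2⁻¹ ^ (-q) * 2⁻¹ := by
      rw [sub_eq_neg_add, rpow_add _ _ (by simp) (by simp), rpow_one]
    have ha' : a ^ (1 - q) = a ^ (-q) * a := by
      rw [sub_eq_neg_add, rpow_add _ _ ha0 ha, rpow_one]
    rw [mul_rpow_of_ne_top ha (by simp), ← rpow_natCast_mul, mul_comm _ (-q), rpow_mul_natCast,
      h2, ha', mul_pow, pow_succ]
    ring
  simp_rw [hterm]
  rw [ENNReal.tsum_mul_left, ENNReal.tsum_geometric]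
  refine mul_ne_top (mul_ne_top (rpow_ne_top_of_nonneg (by linarith) ha) (by simp)) ?_
  exact ENNReal.inv_ne_top.2 (tsub_pos_of_lt (rpow_lt_one (by norm_num) (by linarith))).ne'

/-- Cut at the dyadic levels `ν univ * 2⁻ⁿ`: the level set `{ν (Ioi t) ≤ ν univ * 2⁻ⁿ}` has
mass at most `ν univ * 2⁻ⁿ`, and off the next level set the integrand is at most
`(ν univ * 2⁻ⁿ⁻¹) ^ (-q)`. -/
theorem lintegral_measure_Ioi_rpow_neg_lt_top (ν : Measure ℝ) [IsFiniteMeasure ν]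
    [NullSingletonClass ν] {q : ℝ} (hq0 : 0 ≤ q) (hq1 : q < 1) :
    ∫⁻ t, ν (Ioi t) ^ (-q) ∂ν < ∞ := by
  set a := ν univ
  rcases eq_or_ne a 0 with ha0 | ha0
  · simp [Measure.measure_univ_eq_zero.1 ha0]
  have hpos : ∀ᵐ t ∂ν, ν (Ioi t) ≠ 0 := by
    simpa [ae_iff] using measure_setOf_measure_Ioi_le ν 0
  have hlevel : ∀ n : ℕ, MeasurableSet {t | ν (Ioi t) ≤ a * 2⁻¹ ^ n} := fun n ↦
    measurableSet_le (measurable_measure_Ioi ν) measurable_const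
  calc ∫⁻ t, ν (Ioi t) ^ (-q) ∂ν
      ≤ ∫⁻ t, ∑' n : ℕ, {t | ν (Ioi t) ≤ a * 2⁻¹ ^ n}.indicator
          (fun _ ↦ (a * 2⁻¹ ^ (n + 1)) ^ (-q)) t ∂ν := by
        refine lintegral_mono_ae (hpos.mono fun t ht ↦ ?_)
        exact rpow_neg_le_tsum_indicator (measure_ne_top ν _) ht (measure_mono (subset_univ _)) hq0
    _ = ∑' n : ℕ, (a * 2⁻¹ ^ (n + 1)) ^ (-q) * ν {t | ν (Ioi t) ≤ a * 2⁻¹ ^ n} := by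
        rw [lintegral_tsum fun n ↦ (measurable_const.indicator (hlevel n)).aemeasurable]
        simp_rw [lintegral_indicator_const (hlevel _)]
    _ ≤ ∑' n : ℕ, (a * 2⁻¹ ^ (n + 1)) ^ (-q) * (a * 2⁻¹ ^ n) :=
        ENNReal.tsum_le_tsum fun n ↦ mul_le_mul_right (measure_setOf_measure_Ioi_le ν _) _
    _ < ∞ := (tsum_rpow_neg_mul_half_pow_ne_top ha0 (measure_ne_top ν _) hq1).lt_top

theorem le_sq_mul_rpow_neg_of_le_mul_rpow_inv {x y C : ℝ≥0∞} (hC0 : C ≠ 0) (hC : C ≠ ∞)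
    (hy : y ≠ ∞) {q : ℝ} (hq : 0 < q) (h : y ≤ C * x ^ (1 / q)) :
    x ≤ x ^ 2 * (C ^ q * y ^ (-q)) := by
  rcases eq_or_ne x 0 with rfl | hx0
  · exact zero_le
  have hyq : y ^ q ≤ C ^ q * x := by
    calc y ^ q ≤ (C * x ^ (1 / q)) ^ q := rpow_le_rpow h hq.le
      _ = C ^ q * x := by
        rw [mul_rpow_of_nonneg _ _ hq.le, ← rpow_mul, one_div, inv_mul_cancel₀ hq.ne', rpow_one]
  rw [rpow_neg, ← div_eq_mul_inv, ← mul_div_assoc,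
    ENNReal.le_div_iff_mul_le (.inr (mul_ne_zero (pow_ne_zero 2 hx0) (by simp [hC0, hq, hC])))
      (.inl (rpow_ne_top_of_nonneg hq.le hy))]
  calc x * y ^ q ≤ x * (C ^ q * x) := mul_le_mul_right hyq x
    _ = x ^ 2 * C ^ q := by ring

theorem lintegral_lt_top_of_withDensity_sq_Ioi_le {μ : Measure ℝ} [NullSingletonClass μ]
    {f : ℝ → ℝ≥0∞} (hf : Measurable f) (hf2 : ∫⁻ t, f t ^ 2 ∂μ < ∞) {C : ℝ≥0∞} (hC0 : C ≠ 0)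
    (hC : C ≠ ∞) {q : ℝ} (hq0 : 0 < q) (hq1 : q < 1)
    (h : ∀ᵐ t ∂μ, μ.withDensity (fun τ ↦ f τ ^ 2) (Ioi t) ≤ C * f t ^ (1 / q)) :
    ∫⁻ t, f t ∂μ < ∞ := by
  set ν := μ.withDensity (fun τ ↦ f τ ^ 2)
  have : IsFiniteMeasure ν := isFiniteMeasure_withDensity hf2.ne
  calc ∫⁻ t, f t ∂μ ≤ ∫⁻ t, f t ^ 2 * (C ^ q * ν (Ioi t) ^ (-q)) ∂μ :=
        lintegral_mono_ae (h.mono fun t ht ↦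
          le_sq_mul_rpow_neg_of_le_mul_rpow_inv hC0 hC (measure_ne_top ν _) hq0 ht)
    _ = ∫⁻ t, C ^ q * ν (Ioi t) ^ (-q) ∂ν :=
        (lintegral_withDensity_eq_lintegral_mul _ (hf.pow_const 2)
          (((measurable_measure_Ioi ν).pow_const _).const_mul _)).symm
    _ = C ^ q * ∫⁻ t, ν (Ioi t) ^ (-q) ∂ν :=
        lintegral_const_mul _ ((measurable_measure_Ioi ν).pow_const _)
    _ < ∞ := mul_lt_top (rpow_lt_top_of_nonneg hq0.le hC)
        (lintegral_measure_Ioi_rpow_neg_lt_top ν hq0.le hq1)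

/-- Integrability lemma (Huang–Takáč / Feireisl–Simondon): if `Z ≥ 0` is measurable with
`Z² ∈ L¹(0,∞)` and `∫_t^∞ Z(τ)² dτ ≤ C Z(t)^{1/(1−ζ)}` for a.e. `t ≥ t₀`, where
`ζ ∈ (0,1/2)`, then `Z ∈ L¹(t₀,∞)`. -/
theorem integrability_lemma (ζ : ℝ) (hζ : ζ ∈ Set.Ioo (0 : ℝ) (1 / 2))
    (Z : ℝ → ℝ) (hZmeas : Measurable Z) (hZnonneg : ∀ t ∈ Set.Ioi (0 : ℝ), 0 ≤ Z t)
    (hZsq : IntegrableOn (fun τ => Z τ ^ 2) (Set.Ioi 0))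
    (C t₀ : ℝ) (hC : 0 < C) (ht₀ : 0 ≤ t₀)
    (hineq : ∀ᵐ t ∂(volume : Measure ℝ), t₀ ≤ t →
      ∫ τ in Set.Ioi t, Z τ ^ 2 ≤ C * Z t ^ ((1 : ℝ) / (1 - ζ))) :
    IntegrableOn Z (Set.Ioi t₀) := by
  obtain ⟨hζ0, hζ1⟩ := hζ
  have hZsq' : IntegrableOn (fun τ ↦ Z τ ^ 2) (Ioi t₀) := hZsq.mono_set (Ioi_subset_Ioi ht₀)
  have henorm_sq : ∀ τ, ‖Z τ‖ₑ ^ 2 = ‖Z τ ^ 2‖ₑ := fun τ ↦ (enorm_pow _ _).symm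
  have htail : ∀ t, t₀ ≤ t → (volume.restrict (Ioi t₀)).withDensity (fun τ ↦ ‖Z τ‖ₑ ^ 2) (Ioi t)
      = ENNReal.ofReal (∫ τ in Ioi t, Z τ ^ 2) := by
    intro t ht
    rw [withDensity_apply _ measurableSet_Ioi, Measure.restrict_restrict measurableSet_Ioi,
      inter_eq_left.2 (Ioi_subset_Ioi ht), ofReal_integral_eq_lintegral_ofReal
        (hZsq'.mono_set (Ioi_subset_Ioi ht)) (.of_forall fun τ ↦ sq_nonneg (Z τ))]
    simp_rw [henorm_sq, Real.enorm_of_nonneg (sq_nonneg _)]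
  refine ⟨hZmeas.aestronglyMeasurable, ?_⟩
  refine lintegral_lt_top_of_withDensity_sq_Ioi_le hZmeas.enorm ?_ (ofReal_pos.2 hC).ne'
    ofReal_ne_top (q := 1 - ζ) (by linarith) (by linarith) ?_
  · simpa only [henorm_sq] using hasFiniteIntegral_iff_enorm.1 hZsq'.2
  · filter_upwards [ae_restrict_of_ae hineq, ae_restrict_mem measurableSet_Ioi] with t ht htt₀
    have hZt : 0 ≤ Z t := hZnonneg t (ht₀.trans_lt htt₀)
    rw [htail t htt₀.le, Real.enorm_of_nonneg hZt, ofReal_rpow_of_nonneg hZt (one_div_pos.2 (by linarith)).le,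
      ← ofReal_mul hC.le]
    exact ofReal_le_ofReal (ht htt₀.le)
end

section
/- Let ζ ∈ (0, 1/2), ξ > 0, C > 0, t₀ ≥ 0, and let K : [t₀,∞) → [0,∞) be differentiable and nonincreasing, satisfying K(t)^{2(1−ζ)} ≤ −C K′(t) + C (1+t)^{−2(1−ζ)(1+ξ)} for all t ≥ t₀. Then there exists a constant C′ > 0 such that K(t) ≤ C′ (1+t)^{−ι} for all t ≥ t₀, where ι = min{ 1/(1−2ζ), 1+ξ }. -/
/-!
With `p = 2(1 - ζ) > 1`, the barrier `ψ(t) = M (1 + t)^(-ι)` is a strict supersolution of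
`y^p = -C y' + C (1 + t)^(-p(1 + ξ))` once `M` is large: the choice of `ι` makes both `-ψ'`,
of order `(1 + t)^(-ι-1)`, and the forcing term decay at least as fast as `ψ^p`, of order
`(1 + t)^(-pι)`, and `M^p` beats the linear-in-`M` coefficient `C ι M + C`. Taking also
`ψ(t₀) ≥ K(t₀)`, the differential inequality forces `K' < ψ'` wherever the graphs touch, so `K`
can never cross `ψ`.
-/

open Filter

theorem le_of_subsolution_of_strict_supersolution {K ψ ψ' F φ : ℝ → ℝ} {C t₀ : ℝ} (hC : 0 < C)
    (hK : ∀ t ≥ t₀, DifferentiableAt ℝ K t) (hψ : ∀ t ≥ t₀, HasDerivAt ψ (ψ' t) t)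
    (hsub : ∀ t ≥ t₀, φ (K t) ≤ -C * deriv K t + C * F t)
    (hsuper : ∀ t ≥ t₀, -C * ψ' t + C * F t < φ (ψ t))
    (h₀ : K t₀ ≤ ψ t₀) {t : ℝ} (ht : t₀ ≤ t) : K t ≤ ψ t := by
  refine image_le_of_deriv_right_lt_deriv_boundary' (b := t)
    (fun x hx => (hK x hx.1).continuousAt.continuousWithinAt)
    (fun x hx => (hK x hx.1).hasDerivAt.hasDerivWithinAt) h₀
    (fun x hx => (hψ x hx.1).continuousAt.continuousWithinAt)
    (fun x hx => (hψ x hx.1).hasDerivWithinAt) (fun x hx hcontact => ?_) ⟨ht, le_rfl⟩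
  have hsuper_x := hsuper x hx.1
  rw [← hcontact] at hsuper_x
  nlinarith [hsub x hx.1]

theorem eventually_mul_add_lt_rpow {p : ℝ} (hp : 1 < p) (a b : ℝ) :
    ∀ᶠ M in atTop, a * M + b < M ^ p := by
  filter_upwards [eventually_ge_atTop 1,
    (tendsto_rpow_atTop (sub_pos.2 hp)).eventually_gt_atTop (|a| + |b|)] with M hM hMp
  have hsplit : M ^ p = M * M ^ (p - 1) := by
    rw [← Real.rpow_one_add' (by positivity) (by linarith), add_sub_cancel]
  rw [hsplit]
  nlinarith [le_abs_self a, le_abs_self b, abs_nonneg a, abs_nonneg b]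

theorem hasDerivAt_mul_one_add_rpow_neg (M ι : ℝ) {t : ℝ} (ht : 0 < 1 + t) :
    HasDerivAt (fun t => M * (1 + t) ^ (-ι)) (-(M * ι * (1 + t) ^ (-ι - 1))) t := by
  simpa [mul_assoc] using
    (((hasDerivAt_id t).const_add 1).rpow_const (p := -ι) (Or.inl ht.ne')).const_mul M

theorem mul_one_add_rpow_neg_strict_supersolution {p q ι C M t : ℝ} (hι : 0 ≤ ι) (hC : 0 ≤ C)
    (hM : 0 ≤ M) (hpι : p * ι ≤ ι + 1) (hq : p * ι ≤ q) (hMp : C * ι * M + C < M ^ p)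
    (ht : 0 ≤ t) :
    -C * -(M * ι * (1 + t) ^ (-ι - 1)) + C * (1 + t) ^ (-q) < (M * (1 + t) ^ (-ι)) ^ p := by
  have h1t : 1 ≤ 1 + t := by linarith
  have hpow : (M * (1 + t) ^ (-ι)) ^ p = M ^ p * (1 + t) ^ (-(p * ι)) := by
    rw [Real.mul_rpow hM (by positivity), ← Real.rpow_mul (by positivity)]
    ring_nf
  have hderiv_decay : (1 + t) ^ (-ι - 1) ≤ (1 + t) ^ (-(p * ι)) :=
    Real.rpow_le_rpow_of_exponent_le h1t (by linarith)
  have hforcing_decay : (1 + t) ^ (-q) ≤ (1 + t) ^ (-(p * ι)) :=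
    Real.rpow_le_rpow_of_exponent_le h1t (by linarith)
  have hCιM : 0 ≤ C * ι * M := by positivity
  rw [hpow]
  calc -C * -(M * ι * (1 + t) ^ (-ι - 1)) + C * (1 + t) ^ (-q)
      ≤ (C * ι * M + C) * (1 + t) ^ (-(p * ι)) := by nlinarith
    _ < M ^ p * (1 + t) ^ (-(p * ι)) := by gcongr

theorem lojasiewicz_ode_decay_general (ζ ξ C t₀ : ℝ) (hζ : ζ ∈ Set.Ioo (0 : ℝ) (1 / 2))
    (hξ : 0 < ξ) (hC : 0 < C) (ht₀ : 0 ≤ t₀)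
    (K : ℝ → ℝ)
    (hKdiff : ∀ t ≥ t₀, DifferentiableAt ℝ K t)
    (hineq : ∀ t ≥ t₀,
      K t ^ (2 * (1 - ζ)) ≤ -C * deriv K t + C * (1 + t) ^ (-(2 * (1 - ζ) * (1 + ξ)))) :
    ∃ C' : ℝ, 0 < C' ∧ ∀ t ≥ t₀,
      K t ≤ C' * (1 + t) ^ (-min (1 / (1 - 2 * ζ)) (1 + ξ)) := by
  obtain ⟨hζ0, hζ1⟩ := hζ
  set p := 2 * (1 - ζ)
  set ι := min (1 / (1 - 2 * ζ)) (1 + ξ)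
  have hι : 0 < ι := lt_min (by rw [one_div_pos]; linarith) (by linarith)
  have hpι : p * ι ≤ ι + 1 := by
    have := (le_div_iff₀ (by linarith : 0 < 1 - 2 * ζ)).1 (min_le_left (1 / (1 - 2 * ζ)) (1 + ξ))
    linarith
  have hq : p * ι ≤ p * (1 + ξ) := mul_le_mul_of_nonneg_left (min_le_right _ _) (by linarith)
  obtain ⟨M, hM0, hMK, hMp⟩ := ((eventually_gt_atTop 0).and
    ((eventually_ge_atTop (K t₀ * (1 + t₀) ^ ι)).and
      (eventually_mul_add_lt_rpow (by linarith : 1 < p) (C * ι) C))).exists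
  have h₀ : K t₀ ≤ M * (1 + t₀) ^ (-ι) := by
    rwa [Real.rpow_neg (by linarith), ← div_eq_mul_inv, le_div_iff₀ (by positivity)]
  refine ⟨M, hM0, fun t ht => le_of_subsolution_of_strict_supersolution (φ := (· ^ p))
    (F := fun t => (1 + t) ^ (-(p * (1 + ξ)))) hC hKdiff
    (fun t ht => hasDerivAt_mul_one_add_rpow_neg M ι (by linarith)) hineq
    (fun t ht => mul_one_add_rpow_neg_strict_supersolution hι.le hC.le hM0.le hpι hq hMp
      (by linarith))
    h₀ ht⟩

/-- Łojasiewicz-type differential inequality with polynomially decaying forcing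
(Ben Hassen's Lemma 2.6): if the nonnegative, differentiable, nonincreasing function `K`
satisfies `K(t)^{2(1−ζ)} ≤ −C K′(t) + C (1+t)^{−2(1−ζ)(1+ξ)}` for all `t ≥ t₀`, then
`K(t) ≤ C′ (1+t)^{−ι}` with `ι = min{1/(1−2ζ), 1+ξ}`. -/
theorem lojasiewicz_ode_decay (ζ ξ C t₀ : ℝ) (hζ : ζ ∈ Set.Ioo (0 : ℝ) (1 / 2))
    (hξ : 0 < ξ) (hC : 0 < C) (ht₀ : 0 ≤ t₀)
    (K : ℝ → ℝ) (hKnonneg : ∀ t ≥ t₀, 0 ≤ K t)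
    (hKdiff : ∀ t ≥ t₀, DifferentiableAt ℝ K t)
    (hKmono : AntitoneOn K (Set.Ici t₀))
    (hineq : ∀ t ≥ t₀,
      K t ^ (2 * (1 - ζ)) ≤ -C * deriv K t + C * (1 + t) ^ (-(2 * (1 - ζ) * (1 + ξ)))) :
    ∃ C' : ℝ, 0 < C' ∧ ∀ t ≥ t₀,
      K t ≤ C' * (1 + t) ^ (-min (1 / (1 - 2 * ζ)) (1 + ξ)) :=
  lojasiewicz_ode_decay_general ζ ξ C t₀ hζ hξ hC ht₀ K hKdiff hineq
end

section
/- Let c > 0, κ > 0, ξ > 0 with 2κ ≤ 1+ξ, and M > 0. Let Q : [0,∞) → ℝ be differentiable and let h₁, h₂ : [0,∞) → [0,∞) be measurable functions such that Q′(t) + c Q(t) ≤ h₁(t) + h₂(t) for all t ≥ 0, h₁(t) ≤ M (1+t)^{−2κ} for all t ≥ 0, and ∫_t^∞ h₂(τ) dτ ≤ M (1+t)^{−(1+ξ)} for all t ≥ 0. Then there exists a constant C > 0 (depending on c, κ, ξ, M and Q(0)) such that Q(t) ≤ C (1+t)^{−2κ} for all t ≥ 0. -/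
/-!
Variation of constants gives `Q t ≤ e^{-ct} Q 0 + ∫₀ᵗ e^{-c(t-s)} (h₁ s + h₂ s) ds`. Split the
integral at `t / 2`: on `[0, t/2]` the kernel is at most `e^{-ct/2}` and the forcing has mass
`O(1)`, while on `[t/2, t]` the forcing is `O((1 + t/2)^{-2κ})`, pointwise for `h₁` and in mass for
`h₂` (this is where `2κ ≤ 1 + ξ` enters). Exponential decay beats every polynomial rate, and
`(1 + t/2)^{-2κ} ≤ 2^{2κ} (1 + t)^{-2κ}`.
-/

open MeasureTheory Set Real

lemma exists_exp_neg_mul_le_mul_one_add_rpow_neg {b e : ℝ} (hb : 0 < b) (he : 0 ≤ e) :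
    ∃ A > 0, ∀ t ≥ (0 : ℝ), exp (-(b * t)) ≤ A * (1 + t) ^ (-e) := by
  -- with `δ = b / (b + e)`: `1 + t ≤ δ⁻¹ (1 + δ t) ≤ δ⁻¹ exp (δ t)` and `δ e ≤ b`
  set δ := b / (b + e)
  have hδ : 0 < δ := by positivity
  have hδ1 : δ ≤ 1 := div_le_one_of_le₀ (by linarith) (by positivity)
  have hδe : δ * e ≤ b := by
    rw [div_mul_eq_mul_div, div_le_iff₀ (by positivity)]; nlinarith
  refine ⟨δ⁻¹ ^ e, by positivity, fun t ht => ?_⟩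
  have hbase : 1 + t ≤ δ⁻¹ * exp (δ * t) := calc
    1 + t ≤ δ⁻¹ * (1 + δ * t) := by
      rw [mul_add, inv_mul_cancel_left₀ hδ.ne']; linarith [(one_le_inv₀ hδ).2 hδ1]
    _ ≤ δ⁻¹ * exp (δ * t) := by gcongr; linarith [add_one_le_exp (δ * t)]
  have hpow : (1 + t) ^ e ≤ δ⁻¹ ^ e * exp (b * t) := calc
    (1 + t) ^ e ≤ (δ⁻¹ * exp (δ * t)) ^ e := by gcongr
    _ = δ⁻¹ ^ e * exp (δ * e * t) := by
      rw [mul_rpow (by positivity) (exp_pos _).le, ← exp_mul, mul_right_comm]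
    _ ≤ δ⁻¹ ^ e * exp (b * t) := by gcongr
  rw [exp_neg, rpow_neg (by linarith), ← div_eq_mul_inv,
    inv_le_comm₀ (exp_pos _) (by positivity), inv_div]
  rwa [div_le_iff₀' (by positivity)]

lemma one_add_div_two_rpow_neg_le {t e : ℝ} (ht : 0 ≤ t) (he : 0 ≤ e) :
    (1 + t / 2) ^ (-e) ≤ 2 ^ e * (1 + t) ^ (-e) := calc
  (1 + t / 2) ^ (-e) ≤ ((1 + t) / 2) ^ (-e) :=
    rpow_le_rpow_of_nonpos (by positivity) (by linarith) (by linarith)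
  _ = 2 ^ e * (1 + t) ^ (-e) := by
    rw [div_rpow (by linarith) (by norm_num), rpow_neg (by norm_num : (0:ℝ) ≤ 2), div_inv_eq_mul,
      mul_comm]

lemma exists_exp_neg_mul_half_add_rpow_neg_le {c e : ℝ} (hc : 0 < c) (he : 0 ≤ e) :
    ∃ A > 0, ∀ t ≥ (0 : ℝ), exp (-(c * (t / 2))) + (1 + t / 2) ^ (-e) ≤ A * (1 + t) ^ (-e) := by
  obtain ⟨A, hA, hexp⟩ := exists_exp_neg_mul_le_mul_one_add_rpow_neg (half_pos hc) he
  refine ⟨A + 2 ^ e, by positivity, fun t ht => ?_⟩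
  have hexp_half : exp (-(c * (t / 2))) ≤ A * (1 + t) ^ (-e) := by
    simpa only [div_mul_eq_mul_div, mul_div_assoc] using hexp t ht
  linarith [one_add_div_two_rpow_neg_le ht he]

lemma integrableOn_and_setIntegral_le_of_setLIntegral_ofReal_le {α : Type*} [MeasurableSpace α]
    {μ : Measure α} {s : Set α} {g : α → ℝ} {B : ℝ} (hs : MeasurableSet s) (hB : 0 ≤ B)
    (hg : AEStronglyMeasurable g (μ.restrict s)) (hg0 : ∀ x ∈ s, 0 ≤ g x)
    (h : ∫⁻ x in s, ENNReal.ofReal (g x) ∂μ ≤ ENNReal.ofReal B) :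
    IntegrableOn g s μ ∧ ∫ x in s, g x ∂μ ≤ B := by
  have hg0' : 0 ≤ᵐ[μ.restrict s] g := (ae_restrict_iff' hs).2 (.of_forall hg0)
  have hint : IntegrableOn g s μ :=
    ⟨hg, (hasFiniteIntegral_iff_ofReal hg0').2 (h.trans_lt ENNReal.ofReal_lt_top)⟩
  refine ⟨hint, (ENNReal.ofReal_le_ofReal_iff hB).1 ?_⟩
  rwa [ofReal_integral_eq_lintegral_ofReal hint hg0']

lemma intervalIntegral_le_of_setLIntegral_Ioi_ofReal_le {g : ℝ → ℝ} {a b B : ℝ} (hab : a ≤ b)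
    (hB : 0 ≤ B) (hg : AEStronglyMeasurable g (volume.restrict (Ioi a)))
    (hg0 : ∀ x > a, 0 ≤ g x) (h : ∫⁻ x in Ioi a, ENNReal.ofReal (g x) ≤ ENNReal.ofReal B) :
    ∫ x in a..b, g x ≤ B := by
  obtain ⟨hint, hle⟩ :=
    integrableOn_and_setIntegral_le_of_setLIntegral_ofReal_le measurableSet_Ioi hB hg hg0 h
  rw [intervalIntegral.integral_of_le hab]
  refine (setIntegral_mono_set hint ?_ Ioc_subset_Ioi_self.eventuallyLE).trans hle
  exact (ae_restrict_iff' measurableSet_Ioi).2 (.of_forall hg0)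

lemma hasDerivAt_exp_neg_mul_sub (c t s : ℝ) :
    HasDerivAt (fun s => exp (-(c * (t - s)))) (exp (-(c * (t - s))) * c) s := by
  have hlin := (((hasDerivAt_id' s).const_sub t).const_mul c).neg
  simp only [mul_neg, mul_one, neg_neg] at hlin
  exact hlin.exp

lemma integral_exp_neg_mul_sub {c : ℝ} (hc : c ≠ 0) (t a b : ℝ) :
    ∫ s in a..b, exp (-(c * (t - s))) = (exp (-(c * (t - b))) - exp (-(c * (t - a)))) / c := by
  have hderiv (s : ℝ) :
      HasDerivAt (fun s => exp (-(c * (t - s))) / c) (exp (-(c * (t - s)))) s := by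
    simpa only [mul_div_cancel_right₀ _ hc] using (hasDerivAt_exp_neg_mul_sub c t s).div_const c
  rw [intervalIntegral.integral_eq_sub_of_hasDerivAt (fun s _ => hderiv s)
    ((by fun_prop : Continuous fun s => exp (-(c * (t - s)))).intervalIntegrable _ _)]
  ring

lemma integral_exp_neg_mul_sub_mul_le_of_le {c t a b K : ℝ} {g : ℝ → ℝ} (hc : 0 < c) (hab : a ≤ b)
    (hK : 0 ≤ K) (hg : IntervalIntegrable g volume a b) (hgK : ∀ s ∈ Icc a b, g s ≤ K) :
    ∫ s in a..b, exp (-(c * (t - s))) * g s ≤ K * exp (-(c * (t - b))) / c := calc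
  ∫ s in a..b, exp (-(c * (t - s))) * g s ≤ ∫ s in a..b, exp (-(c * (t - s))) * K := by
    refine intervalIntegral.integral_mono_on hab
      (hg.continuousOn_mul (by fun_prop)) ((by fun_prop : Continuous _).intervalIntegrable _ _)
      fun s hs => ?_
    exact mul_le_mul_of_nonneg_left (hgK s hs) (exp_pos _).le
  _ = K * ((exp (-(c * (t - b))) - exp (-(c * (t - a)))) / c) := by
    rw [intervalIntegral.integral_mul_const, integral_exp_neg_mul_sub hc.ne', mul_comm]
  _ ≤ K * exp (-(c * (t - b))) / c := by
    rw [← mul_div_assoc]; gcongr; linarith [exp_pos (-(c * (t - a)))]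

lemma integral_exp_neg_mul_sub_mul_le_mul_integral {c t a b : ℝ} {g : ℝ → ℝ} (hc : 0 ≤ c)
    (hab : a ≤ b) (hg : IntervalIntegrable g volume a b) (hg0 : ∀ s ∈ Icc a b, 0 ≤ g s) :
    ∫ s in a..b, exp (-(c * (t - s))) * g s ≤ exp (-(c * (t - b))) * ∫ s in a..b, g s := by
  rw [← intervalIntegral.integral_const_mul]
  refine intervalIntegral.integral_mono_on hab
    (hg.continuousOn_mul (by fun_prop)) (hg.const_mul _) fun s hs => ?_
  gcongr
  · exact hg0 s hs
  · exact hs.2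

lemma intervalIntegrable_one_add_rpow (p : ℝ) {a b : ℝ} (ha : -1 < a) (hb : -1 < b) :
    IntervalIntegrable (fun s : ℝ => (1 + s) ^ p) volume a b :=
  ContinuousOn.intervalIntegrable <| (continuousOn_const.add continuousOn_id).rpow_const
    fun s hs => Or.inl (by linarith [lt_min ha hb, hs.1] : (0 : ℝ) < 1 + s).ne'

lemma integral_exp_neg_mul_sub_mul_one_add_rpow_neg_le {c e t : ℝ} (hc : 0 < c) (he : 0 ≤ e)
    (ht : 0 ≤ t) :
    ∫ s in 0..t, exp (-(c * (t - s))) * (1 + s) ^ (-e)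
      ≤ (exp (-(c * (t / 2))) + (1 + t / 2) ^ (-e)) / c := by
  have ht2 : 0 ≤ t / 2 := by positivity
  have hint {a b : ℝ} (ha : 0 ≤ a) (hb : 0 ≤ b) :
      IntervalIntegrable (fun s : ℝ => (1 + s) ^ (-e)) volume a b :=
    intervalIntegrable_one_add_rpow _ (by linarith) (by linarith)
  have hmono {a s : ℝ} (ha : 0 ≤ a) (hs : a ≤ s) : (1 + s) ^ (-e) ≤ (1 + a) ^ (-e) :=
    rpow_le_rpow_of_nonpos (by linarith) (by linarith) (by linarith)
  have hfirst := integral_exp_neg_mul_sub_mul_le_of_le (t := t) hc ht2 zero_le_one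
    (hint le_rfl ht2) fun s hs => (hmono le_rfl hs.1).trans_eq (by simp)
  have hsecond := integral_exp_neg_mul_sub_mul_le_of_le (t := t) hc (half_le_self ht)
    (by positivity) (hint ht2 ht) fun s hs => hmono ht2 hs.1
  rw [← intervalIntegral.integral_add_adjacent_intervals
    ((hint le_rfl ht2).continuousOn_mul (by fun_prop))
    ((hint ht2 ht).continuousOn_mul (by fun_prop))]
  rw [sub_half, one_mul] at hfirst
  rw [sub_self, mul_zero, neg_zero, exp_zero, mul_one] at hsecond
  rw [add_div]
  linarith

lemma integral_exp_neg_mul_sub_mul_le_of_tail {c t M p : ℝ} {g : ℝ → ℝ} (hc : 0 ≤ c) (ht : 0 ≤ t)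
    (hg : IntegrableOn g (Icc 0 t)) (hg0 : ∀ s ∈ Icc 0 t, 0 ≤ g s)
    (htail : ∀ a b, 0 ≤ a → a ≤ b → ∫ s in a..b, g s ≤ M * (1 + a) ^ (-p)) :
    ∫ s in 0..t, exp (-(c * (t - s))) * g s ≤ M * (exp (-(c * (t / 2))) + (1 + t / 2) ^ (-p)) := by
  have ht2 : 0 ≤ t / 2 := by positivity
  have hint {a b : ℝ} (ha : 0 ≤ a) (hab : a ≤ b) (hb : b ≤ t) : IntervalIntegrable g volume a b :=
    (hg.mono_set (uIcc_of_le hab ▸ Icc_subset_Icc ha hb)).intervalIntegrable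
  have hfirst := integral_exp_neg_mul_sub_mul_le_mul_integral (t := t) hc ht2
    (hint le_rfl ht2 (half_le_self ht)) fun s hs => hg0 s ⟨hs.1, hs.2.trans (half_le_self ht)⟩
  have hsecond := integral_exp_neg_mul_sub_mul_le_mul_integral (t := t) hc (half_le_self ht)
    (hint ht2 (half_le_self ht) le_rfl) fun s hs => hg0 s ⟨ht2.trans hs.1, hs.2⟩
  rw [← intervalIntegral.integral_add_adjacent_intervals
    ((hint le_rfl ht2 (half_le_self ht)).continuousOn_mul (by fun_prop))
    ((hint ht2 (half_le_self ht) le_rfl).continuousOn_mul (by fun_prop))]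
  rw [sub_half] at hfirst
  rw [sub_self, mul_zero, neg_zero, exp_zero, one_mul] at hsecond
  have htail_first := htail 0 (t / 2) le_rfl ht2
  rw [add_zero, one_rpow, mul_one] at htail_first
  have htail_first' := mul_le_mul_of_nonneg_left htail_first (exp_pos (-(c * (t / 2)))).le
  linarith [htail (t / 2) t ht2 (half_le_self ht)]

lemma integral_exp_neg_mul_sub_mul_mixed_forcing_le {c e t M : ℝ} {g : ℝ → ℝ} (hc : 0 < c)
    (he : 0 ≤ e) (ht : 0 ≤ t) (hM : 0 ≤ M) (hg : IntegrableOn g (Icc 0 t))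
    (hg0 : ∀ s ∈ Icc 0 t, 0 ≤ g s)
    (htail : ∀ a b, 0 ≤ a → a ≤ b → ∫ s in a..b, g s ≤ M * (1 + a) ^ (-e)) :
    ∫ s in 0..t, exp (-(c * (t - s))) * (M * (1 + s) ^ (-e) + g s)
      ≤ (M / c + M) * (exp (-(c * (t / 2))) + (1 + t / 2) ^ (-e)) := by
  have hpoly : IntervalIntegrable (fun s => exp (-(c * (t - s))) * (1 + s) ^ (-e)) volume 0 t :=
    (intervalIntegrable_one_add_rpow _ (by norm_num) (by linarith)).continuousOn_mul (by fun_prop)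
  have hsplit : ∫ s in 0..t, exp (-(c * (t - s))) * (M * (1 + s) ^ (-e) + g s)
      = M * (∫ s in 0..t, exp (-(c * (t - s))) * (1 + s) ^ (-e))
        + ∫ s in 0..t, exp (-(c * (t - s))) * g s := by
    rw [← intervalIntegral.integral_const_mul, ← intervalIntegral.integral_add (hpoly.const_mul M)
      (((intervalIntegrable_iff_integrableOn_Icc_of_le ht).2 hg).continuousOn_mul (by fun_prop))]
    congr 1 with s
    ring
  rw [hsplit]
  have hpoly_le := mul_le_mul_of_nonneg_left
    (integral_exp_neg_mul_sub_mul_one_add_rpow_neg_le (t := t) hc he ht) hM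
  have htail_le := integral_exp_neg_mul_sub_mul_le_of_tail hc.le ht hg hg0 htail
  calc _ ≤ M * ((exp (-(c * (t / 2))) + (1 + t / 2) ^ (-e)) / c)
        + M * (exp (-(c * (t / 2))) + (1 + t / 2) ^ (-e)) := add_le_add hpoly_le htail_le
    _ = _ := by ring

lemma le_exp_neg_mul_mul_add_integral_of_deriv_add_mul_le {Q F : ℝ → ℝ} {c a t : ℝ} (hat : a ≤ t)
    (hQ : ∀ s ∈ Icc a t, DifferentiableAt ℝ Q s) (hF : IntegrableOn F (Icc a t))
    (h : ∀ s ∈ Ioo a t, deriv Q s + c * Q s ≤ F s) :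
    Q t ≤ exp (-(c * (t - a))) * Q a + ∫ s in a..t, exp (-(c * (t - s))) * F s := by
  have hineq := intervalIntegral.sub_le_integral_of_hasDeriv_right_of_le hat
    (g := fun s => exp (-(c * (t - s))) * Q s)
    (g' := fun s => exp (-(c * (t - s))) * c * Q s + exp (-(c * (t - s))) * deriv Q s)
    (φ := fun s => exp (-(c * (t - s))) * F s)
    ((continuous_exp.comp (by fun_prop)).continuousOn.mul
      fun s hs => (hQ s hs).continuousAt.continuousWithinAt)
    (fun s hs => ((hasDerivAt_exp_neg_mul_sub c t s).mul
      (hQ s (Ioo_subset_Icc_self hs)).hasDerivAt).hasDerivWithinAt)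
    (hF.continuousOn_mul (by fun_prop) isCompact_Icc)
    fun s hs => by
      have hs' := mul_le_mul_of_nonneg_left (h s hs) (exp_pos (-(c * (t - s)))).le
      linarith
  simp only [sub_self, mul_zero, neg_zero, exp_zero, one_mul] at hineq
  linarith

lemma le_mul_exp_neg_add_rpow_neg_of_deriv_add_mul_le {Q g : ℝ → ℝ} {c e M t : ℝ} (hc : 0 < c)
    (he : 0 ≤ e) (hM : 0 ≤ M) (ht : 0 ≤ t) (hQ : ∀ s ∈ Icc 0 t, DifferentiableAt ℝ Q s)
    (hg : IntegrableOn g (Icc 0 t)) (hg0 : ∀ s ∈ Icc 0 t, 0 ≤ g s)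
    (htail : ∀ a b, 0 ≤ a → a ≤ b → ∫ s in a..b, g s ≤ M * (1 + a) ^ (-e))
    (h : ∀ s ∈ Ioo 0 t, deriv Q s + c * Q s ≤ M * (1 + s) ^ (-e) + g s) :
    Q t ≤ (|Q 0| + M / c + M) * (exp (-(c * (t / 2))) + (1 + t / 2) ^ (-e)) := by
  have hF : IntegrableOn (fun s => M * (1 + s) ^ (-e) + g s) (Icc 0 t) :=
    (((intervalIntegrable_iff_integrableOn_Icc_of_le ht).1
      (intervalIntegrable_one_add_rpow _ (by norm_num) (by linarith))).const_mul M).add hg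
  have hduhamel := le_exp_neg_mul_mul_add_integral_of_deriv_add_mul_le ht hQ hF h
  have hforcing := integral_exp_neg_mul_sub_mul_mixed_forcing_le hc he ht hM hg hg0 htail
  have hinit : exp (-(c * (t - 0))) * Q 0
      ≤ |Q 0| * (exp (-(c * (t / 2))) + (1 + t / 2) ^ (-e)) := calc
    _ ≤ exp (-(c * t)) * |Q 0| := by rw [sub_zero]; gcongr; exact le_abs_self _
    _ ≤ exp (-(c * (t / 2))) * |Q 0| := by gcongr; linarith
    _ ≤ _ := by
      rw [mul_comm]
      gcongr
      exact le_add_of_nonneg_right (by positivity)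
  linarith

theorem gronwall_mixed_forcing_decay_general (c κ ξ M : ℝ) (hc : 0 < c) (hκ : 0 < κ)
    (hκξ : 2 * κ ≤ 1 + ξ) (hM : 0 < M)
    (Q h₁ h₂ : ℝ → ℝ)
    (hQdiff : ∀ t ≥ (0 : ℝ), DifferentiableAt ℝ Q t)
    (h₂meas : Measurable h₂)
    (h₂nonneg : ∀ t ≥ (0 : ℝ), 0 ≤ h₂ t)
    (hineq : ∀ t ≥ (0 : ℝ), deriv Q t + c * Q t ≤ h₁ t + h₂ t)
    (hh₁ : ∀ t ≥ (0 : ℝ), h₁ t ≤ M * (1 + t) ^ (-(2 * κ)))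
    (hh₂ : ∀ t ≥ (0 : ℝ),
      ∫⁻ τ in Set.Ioi t, ENNReal.ofReal (h₂ τ) ≤ ENNReal.ofReal (M * (1 + t) ^ (-(1 + ξ)))) :
    ∃ C : ℝ, 0 < C ∧ ∀ t ≥ (0 : ℝ), Q t ≤ C * (1 + t) ^ (-(2 * κ)) := by
  have hκ2 : 0 ≤ 2 * κ := by positivity
  obtain ⟨A, hA, hdecay⟩ := exists_exp_neg_mul_half_add_rpow_neg_le hc hκ2
  have hh₂int : IntegrableOn h₂ (Ici 0) := by
    rw [integrableOn_Ici_iff_integrableOn_Ioi]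
    exact (integrableOn_and_setIntegral_le_of_setLIntegral_ofReal_le measurableSet_Ioi
      (by positivity) h₂meas.aestronglyMeasurable (fun s hs => h₂nonneg s hs.le) (hh₂ 0 le_rfl)).1
  have hh₂tail (a b : ℝ) (ha : 0 ≤ a) (hab : a ≤ b) :
      ∫ s in a..b, h₂ s ≤ M * (1 + a) ^ (-(2 * κ)) := by
    refine (intervalIntegral_le_of_setLIntegral_Ioi_ofReal_le hab (by positivity)
      h₂meas.aestronglyMeasurable (fun s hs => h₂nonneg s (ha.trans hs.le)) (hh₂ a ha)).trans ?_
    gcongr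
    linarith
  refine ⟨(|Q 0| + M / c + M) * A, by positivity, fun t ht => ?_⟩
  calc Q t ≤ (|Q 0| + M / c + M) * (exp (-(c * (t / 2))) + (1 + t / 2) ^ (-(2 * κ))) :=
        le_mul_exp_neg_add_rpow_neg_of_deriv_add_mul_le hc hκ2 hM.le ht
          (fun s hs => hQdiff s hs.1) (hh₂int.mono_set Icc_subset_Ici_self)
          (fun s hs => h₂nonneg s hs.1) hh₂tail
          fun s hs => (hineq s hs.1.le).trans (add_le_add (hh₁ s hs.1.le) le_rfl)
    _ ≤ (|Q 0| + M / c + M) * (A * (1 + t) ^ (-(2 * κ))) := by gcongr; exact hdecay t ht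
    _ = _ := by ring

/-- Linear Gronwall-type decay estimate with mixed polynomial and tail-integrable forcing:
if `Q′ + cQ ≤ h₁ + h₂` with `h₁(t) ≤ M(1+t)^{−2κ}` and `∫_t^∞ h₂ ≤ M(1+t)^{−(1+ξ)}`,
`2κ ≤ 1+ξ`, then `Q(t) ≤ C (1+t)^{−2κ}`. -/
theorem gronwall_mixed_forcing_decay (c κ ξ M : ℝ) (hc : 0 < c) (hκ : 0 < κ) (hξ : 0 < ξ)
    (hκξ : 2 * κ ≤ 1 + ξ) (hM : 0 < M)
    (Q h₁ h₂ : ℝ → ℝ)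
    (hQdiff : ∀ t ≥ (0 : ℝ), DifferentiableAt ℝ Q t)
    (h₁meas : Measurable h₁) (h₂meas : Measurable h₂)
    (h₁nonneg : ∀ t ≥ (0 : ℝ), 0 ≤ h₁ t) (h₂nonneg : ∀ t ≥ (0 : ℝ), 0 ≤ h₂ t)
    (hineq : ∀ t ≥ (0 : ℝ), deriv Q t + c * Q t ≤ h₁ t + h₂ t)
    (hh₁ : ∀ t ≥ (0 : ℝ), h₁ t ≤ M * (1 + t) ^ (-(2 * κ)))
    (hh₂ : ∀ t ≥ (0 : ℝ),
      ∫⁻ τ in Set.Ioi t, ENNReal.ofReal (h₂ τ) ≤ ENNReal.ofReal (M * (1 + t) ^ (-(1 + ξ)))) :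
    ∃ C : ℝ, 0 < C ∧ ∀ t ≥ (0 : ℝ), Q t ≤ C * (1 + t) ^ (-(2 * κ)) :=
  gronwall_mixed_forcing_decay_general c κ ξ M hc hκ hκξ hM Q h₁ h₂ hQdiff h₂meas h₂nonneg hineq hh₁
    hh₂
end

section
/- Let Ω ⊂ ℝ² be a bounded open set, T > 0, γ > 0, η > 0 and n ≥ 1. Let v : Ω × (0,T] → ℝ² be a (given) vector field, and let d : closure(Ω) × [0,T] → ℝⁿ be continuous, with d twice continuously differentiable in x and continuously differentiable in t on Ω × (0,T], satisfying pointwise the equation ∂ₜd + (v·∇)d = γ (Δd − η^{−2}(|d|² − 1) d) in Ω × (0,T]. If |d(x,0)| ≤ 1 for all x ∈ closure(Ω) and |d(x,t)| ≤ 1 for all x ∈ ∂Ω and t ∈ [0,T], then |d(x,t)| ≤ 1 for all (x,t) ∈ closure(Ω) × [0,T]. -/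
/-!
Maximize `‖d‖²` over the compact cylinder `closure Ω × [0, T]`. If the maximum exceeds `1`, the
boundary and initial bounds put the maximizer `(x₀, t₀)` in `Ω × (0, T]`. There the spatial
gradient of `‖d‖²` vanishes, so `⟪d, (v·∇)d⟫ = 0`; the second derivative of `‖d‖²` along each
coordinate line is nonpositive, so `⟪d, Δd⟫ ≤ 0`; and `‖d‖²` is nondecreasing into `t₀` from the
left, so `⟪d, ∂ₜd⟫ ≥ 0`. Pairing the equation with `d` then gives
`0 ≤ γ (⟪d, Δd⟫ - η⁻² (‖d‖² - 1) ‖d‖²) < 0`.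
-/

open Filter Topology Set RealInnerProductSpace

theorem IsLocalMax.deriv_deriv_nonpos {f : ℝ → ℝ} {a : ℝ} (hmax : IsLocalMax f a)
    (hf : ContinuousAt f a) : deriv (deriv f) a ≤ 0 := by
  by_contra! hpos
  have hmin : IsLocalMin f a := isLocalMin_of_deriv_deriv_pos hpos hmax.deriv_eq_zero hf
  have hconst : f =ᶠ[𝓝 a] fun _ => f a :=
    (hmax.and hmin).mono fun _ hy => le_antisymm hy.1 hy.2
  have hzero : deriv (deriv f) a = 0 := by
    rw [hconst.deriv.deriv_eq]
    simp
  exact hpos.ne' hzero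

section InnerProductSpace

variable {E F : Type*} [NormedAddCommGroup E] [NormedSpace ℝ E]
  [NormedAddCommGroup F] [InnerProductSpace ℝ F]

theorem IsLocalMax.inner_add_norm_sq_nonpos {g g' : ℝ → F} {c : F} {a : ℝ}
    (hmax : IsLocalMax (‖g ·‖ ^ 2) a) (hg : ∀ᶠ s in 𝓝 a, HasDerivAt g (g' s) s)
    (hg' : HasDerivAt g' c a) : ⟪g a, c⟫ + ‖g' a‖ ^ 2 ≤ 0 := by
  have hderiv : deriv (‖g ·‖ ^ 2) =ᶠ[𝓝 a] fun s => 2 * ⟪g s, g' s⟫ :=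
    hg.mono fun s hs => hs.norm_sq.deriv
  have hsecond : deriv (deriv (‖g ·‖ ^ 2)) a = 2 * (⟪g a, c⟫ + ⟪g' a, g' a⟫) := by
    rw [hderiv.deriv_eq]
    exact ((hg.self_of_nhds.inner ℝ hg').const_mul 2).deriv
  have := hmax.deriv_deriv_nonpos (hg.self_of_nhds.continuousAt.norm.pow 2)
  rw [hsecond, real_inner_self_eq_norm_sq] at this
  linarith

theorem IsLocalMax.inner_fderiv_eq_zero {f : E → F} {x : E}
    (hmax : IsLocalMax (‖f ·‖ ^ 2) x) (hf : DifferentiableAt ℝ f x) (h : E) :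
    ⟪f x, fderiv ℝ f x h⟫ = 0 := by
  have hzero := congrArg (· h) (hmax.hasFDerivAt_eq_zero hf.hasFDerivAt.norm_sq)
  simpa using hzero

theorem IsLocalMax.inner_fderiv_fderiv_self_nonpos {f : E → F} {x : E}
    (hmax : IsLocalMax (‖f ·‖ ^ 2) x) (hf : ContDiffAt ℝ 2 f x) (e : E) :
    ⟪f x, fderiv ℝ (fderiv ℝ f) x e e⟫ ≤ 0 := by
  let ℓ : ℝ → E := fun s => x + s • e
  have hℓ : ∀ s, HasDerivAt ℓ e s := fun s => by
    simpa only [id, one_smul] using ((hasDerivAt_id s).smul_const e).const_add x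
  have hℓ0 : ℓ 0 = x := by simp [ℓ]
  have hℓx : Tendsto ℓ (𝓝 0) (𝓝 x) := hℓ0 ▸ (hℓ 0).continuousAt.tendsto
  have hdiff : ∀ᶠ s in 𝓝 (0 : ℝ), HasDerivAt (f ∘ ℓ) (fderiv ℝ f (ℓ s) e) s :=
    hℓx.eventually ((hf.eventually (by simp)).mono fun _ hy =>
      hy.differentiableAt two_ne_zero) |>.mono fun s hs =>
        hs.hasFDerivAt.comp_hasDerivAt s (hℓ s)
  have hfd : DifferentiableAt ℝ (fderiv ℝ f) x :=
    (hf.fderiv_right (m := 1) (by norm_num)).differentiableAt one_ne_zero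
  have hdiff' : HasDerivAt (fun s => fderiv ℝ f (ℓ s) e) (fderiv ℝ (fderiv ℝ f) x e e) 0 := by
    simpa using (hfd.hasFDerivAt.comp_hasDerivAt_of_eq 0 (hℓ 0) hℓ0.symm).clm_apply
      (hasDerivAt_const 0 e)
  have hmax' : IsLocalMax (‖(f ∘ ℓ) ·‖ ^ 2) 0 := by
    simpa only [IsLocalMax, IsMaxFilter, Function.comp_apply, hℓ0] using hℓx.eventually hmax
  have := hmax'.inner_add_norm_sq_nonpos hdiff hdiff'
  rw [Function.comp_apply, hℓ0] at this
  linarith [sq_nonneg ‖fderiv ℝ f x e‖]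

theorem IsLocalMaxOn.inner_nonneg_of_hasDerivWithinAt_Ioc {g : ℝ → F} {g' : F} {a b t : ℝ}
    (hmax : IsLocalMaxOn (‖g ·‖ ^ 2) (Ioc a b) t) (ht : t ∈ Ioc a b)
    (hg : HasDerivWithinAt g g' (Ioc a b) t) : 0 ≤ ⟪g t, g'⟫ := by
  have hcone : (a + t) / 2 - t ∈ posTangentConeAt (Ioc a b) t := by
    refine sub_mem_posTangentConeAt_of_segment_subset ?_
    rw [segment_symm, segment_eq_Icc (by linarith [ht.1])]
    exact fun s hs => ⟨by linarith [hs.1, ht.1], hs.2.trans ht.2⟩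
  have := hmax.hasFDerivWithinAt_nonpos hg.norm_sq.hasFDerivWithinAt hcone
  simp only [ContinuousLinearMap.toSpanSingleton_apply, smul_eq_mul] at this
  nlinarith [ht.1]

theorem norm_sq_le_one_of_inner_ginzburgLandau {u ut uadv L : F} {γ η : ℝ} (hγ : 0 < γ)
    (hη : η ≠ 0) (heq : ut + uadv = γ • (L - (η ^ 2)⁻¹ • ((‖u‖ ^ 2 - 1) • u)))
    (ht : 0 ≤ ⟪u, ut⟫) (hadv : ⟪u, uadv⟫ = 0) (hL : ⟪u, L⟫ ≤ 0) : ‖u‖ ^ 2 ≤ 1 := by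
  have hpair := congrArg (⟪u, ·⟫) heq
  simp only [inner_add_right, inner_sub_right, real_inner_smul_right,
    real_inner_self_eq_norm_sq] at hpair
  by_contra! hgt
  have : 0 < (η ^ 2)⁻¹ * ((‖u‖ ^ 2 - 1) * ‖u‖ ^ 2) := by
    have : 0 < η ^ 2 := by positivity
    have : 0 < ‖u‖ ^ 2 - 1 := by linarith
    positivity
  nlinarith

end InnerProductSpace

theorem director_maximum_principle_general {n : ℕ}
    (Ω : Set (EuclideanSpace ℝ (Fin 2))) (hΩopen : IsOpen Ω)
    (hΩbdd : Bornology.IsBounded Ω)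
    (T γ η : ℝ) (hγ : 0 < γ) (hη : 0 < η)
    (v : EuclideanSpace ℝ (Fin 2) → ℝ → EuclideanSpace ℝ (Fin 2))
    (d : EuclideanSpace ℝ (Fin 2) → ℝ → EuclideanSpace ℝ (Fin n))
    (hdcont : ContinuousOn (fun p : EuclideanSpace ℝ (Fin 2) × ℝ => d p.1 p.2)
      (closure Ω ×ˢ Set.Icc 0 T))
    (hdx : ∀ t ∈ Set.Ioc (0 : ℝ) T, ContDiffOn ℝ 2 (fun y => d y t) Ω)
    (hdt : ∀ x ∈ Ω, ContDiffOn ℝ 1 (fun s => d x s) (Set.Ioc 0 T))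
    (heq : ∀ x ∈ Ω, ∀ t ∈ Set.Ioc (0 : ℝ) T,
      derivWithin (fun s => d x s) (Set.Ioc 0 T) t
          + fderiv ℝ (fun y => d y t) x (v x t)
        = γ • ((∑ i : Fin 2,
            fderiv ℝ (fderiv ℝ (fun y => d y t)) x (EuclideanSpace.single i 1)
              (EuclideanSpace.single i 1))
          - (η ^ 2)⁻¹ • ((‖d x t‖ ^ 2 - 1) • d x t)))
    (hinit : ∀ x ∈ closure Ω, ‖d x 0‖ ≤ 1)
    (hbdry : ∀ x ∈ frontier Ω, ∀ t ∈ Set.Icc (0 : ℝ) T, ‖d x t‖ ≤ 1) :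
    ∀ x ∈ closure Ω, ∀ t ∈ Set.Icc (0 : ℝ) T, ‖d x t‖ ≤ 1 := by
  intro x hx t ht
  obtain ⟨⟨x₀, t₀⟩, ⟨hx₀, ht₀⟩, hmax⟩ :=
    (hΩbdd.isCompact_closure.prod isCompact_Icc).exists_isMaxOn ⟨(x, t), hx, ht⟩
      (hdcont.norm.pow 2)
  rw [isMaxOn_iff] at hmax
  suffices hle : ‖d x₀ t₀‖ ^ 2 ≤ 1 from
    (sq_le_one_iff₀ (norm_nonneg _)).mp ((hmax (x, t) ⟨hx, ht⟩).trans hle)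
  by_contra! hgt
  have hx₀Ω : x₀ ∈ Ω := by
    by_contra hx₀Ω
    have hfr : x₀ ∈ frontier Ω := by rw [hΩopen.frontier_eq]; exact ⟨hx₀, hx₀Ω⟩
    exact hgt.not_ge (pow_le_one₀ (norm_nonneg _) (hbdry x₀ hfr t₀ ht₀))
  have ht₀pos : t₀ ∈ Ioc 0 T := by
    refine ⟨ht₀.1.lt_of_ne ?_, ht₀.2⟩
    rintro rfl
    exact hgt.not_ge (pow_le_one₀ (norm_nonneg _) (hinit x₀ hx₀))
  have hspace : IsLocalMax (‖d · t₀‖ ^ 2) x₀ :=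
    mem_of_superset (hΩopen.mem_nhds hx₀Ω) fun y hy => hmax (y, t₀) ⟨subset_closure hy, ht₀⟩
  have htime : IsLocalMaxOn (‖d x₀ ·‖ ^ 2) (Ioc 0 T) t₀ :=
    mem_of_superset self_mem_nhdsWithin fun s hs => hmax (x₀, s) ⟨hx₀, Ioc_subset_Icc_self hs⟩
  have hC2 : ContDiffAt ℝ 2 (fun y => d y t₀) x₀ :=
    (hdx t₀ ht₀pos).contDiffAt (hΩopen.mem_nhds hx₀Ω)
  refine hgt.not_ge (norm_sq_le_one_of_inner_ginzburgLandau hγ hη.ne'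
    (heq x₀ hx₀Ω t₀ ht₀pos) ?_ ?_ ?_)
  · exact htime.inner_nonneg_of_hasDerivWithinAt_Ioc ht₀pos
      ((hdt x₀ hx₀Ω).differentiableOn one_ne_zero t₀ ht₀pos).hasDerivWithinAt
  · exact hspace.inner_fderiv_eq_zero (hC2.differentiableAt two_ne_zero) _
  · rw [inner_sum]
    exact Finset.sum_nonpos fun i _ => hspace.inner_fderiv_fderiv_self_nonpos hC2 _

/-- Weak maximum principle for the director equation with Ginzburg–Landau nonlinearity:
a classical solution of `∂ₜd + (v·∇)d = γ(Δd − η^{−2}(|d|²−1)d)` on `Ω × (0,T]` with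
`|d| ≤ 1` initially and on the lateral boundary satisfies `|d| ≤ 1` everywhere. -/
theorem director_maximum_principle {n : ℕ} (hn : 1 ≤ n)
    (Ω : Set (EuclideanSpace ℝ (Fin 2))) (hΩopen : IsOpen Ω)
    (hΩbdd : Bornology.IsBounded Ω)
    (T γ η : ℝ) (hT : 0 < T) (hγ : 0 < γ) (hη : 0 < η)
    (v : EuclideanSpace ℝ (Fin 2) → ℝ → EuclideanSpace ℝ (Fin 2))
    (d : EuclideanSpace ℝ (Fin 2) → ℝ → EuclideanSpace ℝ (Fin n))
    (hdcont : ContinuousOn (fun p : EuclideanSpace ℝ (Fin 2) × ℝ => d p.1 p.2)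
      (closure Ω ×ˢ Set.Icc 0 T))
    (hdx : ∀ t ∈ Set.Ioc (0 : ℝ) T, ContDiffOn ℝ 2 (fun y => d y t) Ω)
    (hdt : ∀ x ∈ Ω, ContDiffOn ℝ 1 (fun s => d x s) (Set.Ioc 0 T))
    (heq : ∀ x ∈ Ω, ∀ t ∈ Set.Ioc (0 : ℝ) T,
      derivWithin (fun s => d x s) (Set.Ioc 0 T) t
          + fderiv ℝ (fun y => d y t) x (v x t)
        = γ • ((∑ i : Fin 2,
            fderiv ℝ (fderiv ℝ (fun y => d y t)) x (EuclideanSpace.single i 1)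
              (EuclideanSpace.single i 1))
          - (η ^ 2)⁻¹ • ((‖d x t‖ ^ 2 - 1) • d x t)))
    (hinit : ∀ x ∈ closure Ω, ‖d x 0‖ ≤ 1)
    (hbdry : ∀ x ∈ frontier Ω, ∀ t ∈ Set.Icc (0 : ℝ) T, ‖d x t‖ ≤ 1) :
    ∀ x ∈ closure Ω, ∀ t ∈ Set.Icc (0 : ℝ) T, ‖d x t‖ ≤ 1 :=
  director_maximum_principle_general Ω hΩopen hΩbdd T γ η hγ hη v d hdcont hdx hdt heq hinit hbdry
end
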